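/- Let F be a Minkowski norm on ℝ^m with uniformity constant Λ_F, and let B_F := { y ∈ ℝ^m : F(y) < 1 }. Then for every z ≠ 0, (1/vol(𝔹^m)) · ∫_{B_F} det g_y dy ≤ Λ_F^m · √(det g_z), where the integral is with respect to Lebesgue measure, 𝔹^m is the Euclidean unit ball, and det g_y is the determinant of the matrix (g_y(e_i,e_j)) in the standard basis. -/

import Mathlib

open MeasureTheory

/-- The fundamental tensor `g_y(u, v) := (1/2) D²(F²)(y)[u, v]` of a Minkowski norm `F`. -/
noncomputable def fundTensor (m : ℕ) (F : EuclideanSpace ℝ (Fin m) → ℝ)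
    (y u v : EuclideanSpace ℝ (Fin m)) : ℝ :=
  (1 / 2) * (fderiv ℝ (fderiv ℝ (fun x => (F x) ^ 2)) y u) v

/-- A Minkowski norm on `ℝ^m`: positive and smooth away from `0`, positively homogeneous of
degree `1`, with positive definite fundamental tensor. -/
structure IsMinkowskiNorm (m : ℕ) (F : EuclideanSpace ℝ (Fin m) → ℝ) : Prop where
  nonneg : ∀ y, 0 ≤ F y
  pos : ∀ y, y ≠ 0 → 0 < F y
  smooth : ContDiffOn ℝ (⊤ : ℕ∞) F {(0 : EuclideanSpace ℝ (Fin m))}ᶜ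
  homog : ∀ c : ℝ, 0 < c → ∀ y, F (c • y) = c * F y
  posdef : ∀ y, y ≠ 0 → ∀ v, v ≠ 0 → 0 < fundTensor m F y v v

/-- `det g_z`: the determinant of the matrix of the fundamental tensor in the standard basis. -/
noncomputable def fundDet (m : ℕ) (F : EuclideanSpace ℝ (Fin m) → ℝ)
    (z : EuclideanSpace ℝ (Fin m)) : ℝ :=
  Matrix.det (Matrix.of fun i j =>
    fundTensor m F z (EuclideanSpace.single i 1) (EuclideanSpace.single j 1))

namespace HolmesThompsonAux

open Matrix
open scoped MatrixOrder

variable {m : ℕ} {F : EuclideanSpace ℝ (Fin m) → ℝ}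

/-! ### Matrix and volume preliminaries -/

lemma psd_det_nonneg {M : Matrix (Fin m) (Fin m) ℝ} (hM : M.PosSemidef) : 0 ≤ det M := by
  rw [hM.isHermitian.det_eq_prod_eigenvalues]
  exact Finset.prod_nonneg fun i _ => by simpa using hM.eigenvalues_nonneg i

lemma norm_toEuclideanLin_sq (S : Matrix (Fin m) (Fin m) ℝ) (x : EuclideanSpace ℝ (Fin m)) :
    ‖Matrix.toEuclideanLin S x‖ ^ 2 = (S *ᵥ x) ⬝ᵥ (S *ᵥ x) := by
  rw [← real_inner_self_eq_norm_sq]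
  simp [PiLp.inner_apply, Matrix.toEuclideanLin_apply, dotProduct, WithLp.equiv, Equiv.refl_apply]
  rw [EuclideanSpace.norm_sq_eq]
  simp [sq]

/-- The volume of the sublevel set `{x | xᵀ M x < r}` of a positive definite quadratic form. -/
lemma vol_sublevel (hm : 1 ≤ m) (M : Matrix (Fin m) (Fin m) ℝ) (hM : M.PosDef) {r : ℝ}
    (hr : 0 < r) :
    volume {x : EuclideanSpace ℝ (Fin m) | x ⬝ᵥ (M *ᵥ x) < r} =
      ENNReal.ofReal (Real.sqrt r ^ m / Real.sqrt M.det) *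
        volume (Metric.ball (0 : EuclideanSpace ℝ (Fin m)) 1) := by
  haveI : Nontrivial (EuclideanSpace ℝ (Fin m)) :=
    nontrivial_of_ne (EuclideanSpace.single ⟨0, hm⟩ 1) 0 (by
      intro h
      have := congrFun (congrArg (WithLp.equiv 2 _) h) ⟨0, hm⟩
      simp [EuclideanSpace.single_apply] at this)
  set S := CFC.sqrt M with hSdef
  have hSS : S * S = M := CFC.sqrt_mul_sqrt_self M hM.posSemidef.nonneg
  have hSsym : Sᵀ = S := (CFC.sqrt_nonneg M).posSemidef.isHermitian
  have hdS2 : S.det ^ 2 = M.det := by conv_rhs => rw [← hSS]; rw [det_mul, ← sq]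
  have hdSnn : 0 ≤ S.det := psd_det_nonneg (CFC.sqrt_nonneg M).posSemidef
  have hdSpos : 0 < S.det := by nlinarith [hM.det_pos]
  have hdS : S.det = Real.sqrt M.det := by
    rw [← hdS2, Real.sqrt_sq hdSnn]
  set L : EuclideanSpace ℝ (Fin m) →ₗ[ℝ] EuclideanSpace ℝ (Fin m) := Matrix.toEuclideanLin S
  have hdetL : LinearMap.det L = S.det := by
    rw [show L = Matrix.toEuclideanLin S from rfl, Matrix.toEuclideanLin_eq_toLin,
      LinearMap.det_toLin]
  have hq : ∀ x : EuclideanSpace ℝ (Fin m), x ⬝ᵥ (M *ᵥ x) = ‖L x‖ ^ 2 := by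
    intro x
    rw [norm_toEuclideanLin_sq, ← hSS, ← Matrix.mulVec_mulVec, Matrix.dotProduct_mulVec x S,
      ← Matrix.mulVec_transpose, hSsym]
  have hset : {x : EuclideanSpace ℝ (Fin m) | x ⬝ᵥ (M *ᵥ x) < r} =
      L ⁻¹' (Metric.ball (0 : EuclideanSpace ℝ (Fin m)) (Real.sqrt r)) := by
    ext x
    simp only [Set.mem_setOf_eq, Set.mem_preimage, Metric.mem_ball, dist_zero_right]
    rw [hq x, ← Real.lt_sqrt (norm_nonneg _)]
  rw [hset, MeasureTheory.Measure.addHaar_preimage_linearMap volume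
    (by rw [hdetL]; exact hdSpos.ne'),
    Measure.addHaar_ball volume 0 (Real.sqrt_nonneg r), hdetL, hdS, finrank_euclideanSpace_fin,
    ← mul_assoc, ← ENNReal.ofReal_mul (by positivity)]
  congr 2
  rw [abs_inv, abs_of_nonneg (hdS ▸ hdSnn)]
  field_simp

/-! ### The quadratic form of the fundamental tensor -/

lemma euclidean_rep (x : EuclideanSpace ℝ (Fin m)) :
    x = ∑ i, x i • EuclideanSpace.single i 1 := by
  have := (EuclideanSpace.basisFun (Fin m) ℝ).sum_repr x
  simp only [EuclideanSpace.basisFun_apply, EuclideanSpace.basisFun_repr] at this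
  exact this.symm

lemma fundTensor_expand (F : EuclideanSpace ℝ (Fin m) → ℝ) (y x : EuclideanSpace ℝ (Fin m)) :
    fundTensor m F y x x =
      x ⬝ᵥ ((Matrix.of fun i j =>
        fundTensor m F y (EuclideanSpace.single i 1) (EuclideanSpace.single j 1)) *ᵥ x) := by
  set B := fderiv ℝ (fderiv ℝ (fun x => (F x) ^ 2)) y
  have hBx : B x x = ∑ i, ∑ j, x i * x j *
      (B (EuclideanSpace.single i 1) (EuclideanSpace.single j 1)) := by
    have hx : B x x =
        B (∑ i, x i • EuclideanSpace.single i 1) (∑ j, x j • EuclideanSpace.single j 1) := by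
      rw [← euclidean_rep]
    rw [hx, map_sum]
    simp only [ContinuousLinearMap.coe_sum', Finset.sum_apply, _root_.map_smul,
      ContinuousLinearMap.smul_apply, map_sum, smul_eq_mul, Finset.mul_sum]
    rw [Finset.sum_comm]
    refine Finset.sum_congr rfl fun i _ => Finset.sum_congr rfl fun j _ => by ring
  calc fundTensor m F y x x = (1/2) * B x x := rfl
    _ = ∑ i, ∑ j, x i * x j *
        ((1/2) * B (EuclideanSpace.single i 1) (EuclideanSpace.single j 1)) := by
        rw [hBx, Finset.mul_sum]
        refine Finset.sum_congr rfl fun i _ => ?_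
        rw [Finset.mul_sum]
        refine Finset.sum_congr rfl fun j _ => by ring
    _ = x ⬝ᵥ ((Matrix.of fun i j =>
        fundTensor m F y (EuclideanSpace.single i 1) (EuclideanSpace.single j 1)) *ᵥ x) := by
        simp only [dotProduct, Matrix.mulVec, Matrix.of_apply, fundTensor]
        simp only [Finset.mul_sum]
        refine Finset.sum_congr rfl fun i _ => Finset.sum_congr rfl fun j _ => ?_
        ring

lemma fundTensor_zero_right (F : EuclideanSpace ℝ (Fin m) → ℝ) (y : EuclideanSpace ℝ (Fin m)) :
    fundTensor m F y 0 0 = 0 := by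
  simp [fundTensor]

/-! ### Calculus: homogeneity and the Euler identities -/

section calculus
variable (hF : IsMinkowskiNorm m F)

local notation "E" => EuclideanSpace ℝ (Fin m)

include hF

lemma F_zero : F 0 = 0 := by
  have := hF.homog 2 (by norm_num) 0
  rw [smul_zero] at this
  linarith

lemma h_homog (c : ℝ) (hc : 0 < c) (x : E) :
    (fun x => (F x) ^ 2) (c • x) = c ^ 2 * (fun x => (F x) ^ 2) x := by
  simp only
  rw [hF.homog c hc x]; ring

lemma h_contDiffOn : ContDiffOn ℝ (⊤ : ℕ∞) (fun x => (F x) ^ 2) {(0 : E)}ᶜ :=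
  hF.smooth.pow 2

lemma h_contDiffAt {y : E} (hy : y ≠ 0) : ContDiffAt ℝ (⊤ : ℕ∞) (fun x => (F x) ^ 2) y :=
  (h_contDiffOn hF).contDiffAt ((isOpen_compl_singleton).mem_nhds hy)

lemma h_diffAt {y : E} (hy : y ≠ 0) : DifferentiableAt ℝ (fun x => (F x) ^ 2) y :=
  (h_contDiffAt hF hy).differentiableAt (by simp)

lemma h_fderiv_diffAt {y : E} (hy : y ≠ 0) :
    DifferentiableAt ℝ (fderiv ℝ (fun x => (F x) ^ 2)) y :=
  ((h_contDiffAt hF hy).fderiv_right (m := 1) (WithTop.coe_le_coe.mpr le_top)).differentiableAt one_ne_zero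

lemma G_homog {c : ℝ} (hc : 0 < c) {y : E} (hy : y ≠ 0) :
    fderiv ℝ (fun x => (F x) ^ 2) (c • y) = c • fderiv ℝ (fun x => (F x) ^ 2) y := by
  set h : E → ℝ := fun x => (F x) ^ 2 with hh
  have hcy : c • y ≠ 0 := smul_ne_zero hc.ne' hy
  have D1 : HasFDerivAt (fun x => h (c • x))
      ((fderiv ℝ h (c • y)).comp (c • ContinuousLinearMap.id ℝ E)) y := by
    have hinner : HasFDerivAt (fun x : E => c • x) (c • ContinuousLinearMap.id ℝ E) y :=
      (c • ContinuousLinearMap.id ℝ E).hasFDerivAt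
    exact (h_diffAt hF hcy).hasFDerivAt.comp y hinner
  have D2 : HasFDerivAt (fun x => c ^ 2 • h x) (c ^ 2 • fderiv ℝ h y) y :=
    (h_diffAt hF hy).hasFDerivAt.const_smul (c ^ 2)
  have heq : (fun x => h (c • x)) = fun x => c ^ 2 • h x := by
    funext x
    simpa [smul_eq_mul] using h_homog hF c hc x
  rw [heq] at D1
  have huniq := D1.unique D2
  ext v
  have happ := congrArg (fun (T : E →L[ℝ] ℝ) => T v) huniq
  simp only [ContinuousLinearMap.comp_apply, ContinuousLinearMap.smul_apply,
    ContinuousLinearMap.id_apply, _root_.map_smul, smul_eq_mul] at happ ⊢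
  have h2 : c * (fderiv ℝ h (c • y)) v = c * (c * (fderiv ℝ h y) v) := by
    rw [happ]; ring
  exact mul_left_cancel₀ hc.ne' h2

lemma euler1 {y : E} (hy : y ≠ 0) :
    fderiv ℝ (fun x => (F x) ^ 2) y y = 2 * (F y) ^ 2 := by
  set h : E → ℝ := fun x => (F x) ^ 2 with hh
  have hline : HasDerivAt (fun t : ℝ => t • y) y 1 := by
    simpa using (hasDerivAt_id (1:ℝ)).smul_const y
  have A : HasDerivAt (fun t : ℝ => h (t • y)) (fderiv ℝ h y y) 1 := by
    have hd := (h_diffAt hF hy).hasFDerivAt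
    rw [show y = (1:ℝ) • y by simp] at hd
    have := hd.comp_hasDerivAt 1 hline
    simp only [one_smul] at this
    exact this
  have hev : (fun t : ℝ => h (t • y)) =ᶠ[nhds 1] fun t : ℝ => t ^ 2 * h y := by
    filter_upwards [isOpen_Ioi.mem_nhds (by norm_num : (1:ℝ) ∈ Set.Ioi (0:ℝ))] with t ht
    simpa [smul_eq_mul] using h_homog hF t ht y
  have A' : HasDerivAt (fun t : ℝ => t ^ 2 * h y) (fderiv ℝ h y y) 1 :=
    A.congr_of_eventuallyEq hev.symm
  have B : HasDerivAt (fun t : ℝ => t ^ 2 * h y) (2 * h y) 1 := by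
    simpa using (hasDerivAt_pow 2 (1:ℝ)).mul_const (h y)
  exact A'.unique B

lemma euler2 {y : E} (hy : y ≠ 0) :
    fderiv ℝ (fderiv ℝ (fun x => (F x) ^ 2)) y y = fderiv ℝ (fun x => (F x) ^ 2) y := by
  set h : E → ℝ := fun x => (F x) ^ 2 with hh
  set G : E → (E →L[ℝ] ℝ) := fderiv ℝ h with hG
  have hline : HasDerivAt (fun t : ℝ => t • y) y 1 := by
    simpa using (hasDerivAt_id (1:ℝ)).smul_const y
  have A : HasDerivAt (fun t : ℝ => G (t • y)) (fderiv ℝ G y y) 1 := by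
    have hd := (h_fderiv_diffAt hF hy).hasFDerivAt
    rw [show y = (1:ℝ) • y by simp] at hd
    have := hd.comp_hasDerivAt 1 hline
    simp only [one_smul] at this
    exact this
  have hev : (fun t : ℝ => G (t • y)) =ᶠ[nhds 1] fun t : ℝ => t • G y := by
    filter_upwards [isOpen_Ioi.mem_nhds (by norm_num : (1:ℝ) ∈ Set.Ioi (0:ℝ))] with t ht
    exact G_homog hF ht hy
  have A' : HasDerivAt (fun t : ℝ => t • G y) (fderiv ℝ G y y) 1 :=
    A.congr_of_eventuallyEq hev.symm
  have B : HasDerivAt (fun t : ℝ => t • G y) (G y) 1 := by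
    simpa using (hasDerivAt_id (1:ℝ)).smul_const (G y)
  exact A'.unique B

lemma fundTensor_self {y : E} (hy : y ≠ 0) : fundTensor m F y y y = (F y) ^ 2 := by
  rw [fundTensor, euler2 hF hy, euler1 hF hy]
  ring

lemma fundTensor_symm {y : E} (hy : y ≠ 0) (u v : E) :
    fundTensor m F y u v = fundTensor m F y v u := by
  set h : E → ℝ := fun x => (F x) ^ 2 with hh
  have hev : ∀ᶠ x in nhds y, HasFDerivAt h (fderiv ℝ h x) x := by
    filter_upwards [isOpen_compl_singleton.mem_nhds hy] with x hx
    exact (h_diffAt hF hx).hasFDerivAt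
  have hsymm := second_derivative_symmetric_of_eventually hev
    (h_fderiv_diffAt hF hy).hasFDerivAt u v
  rw [fundTensor, fundTensor, hsymm]

end calculus

end HolmesThompsonAux

open HolmesThompsonAux Matrix

/-- Part (2) of the paper's Proposition 8.1, fiberwise (Holmes–Thompson distortion bound):
`(1/vol(𝔹^m)) ∫_{B_F} det g_y dy ≤ Λ_F^m √(det g_z)` for every `z ≠ 0`. -/
theorem holmes_thompson_distortion_bound
    (m : ℕ) (hm : 1 ≤ m) (F : EuclideanSpace ℝ (Fin m) → ℝ)
    (hF : IsMinkowskiNorm m F) (Λ : ℝ)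
    (hΛ : ∀ y, y ≠ 0 → ∀ z, z ≠ 0 → ∀ w, w ≠ 0 →
      fundTensor m F y w w ≤ Λ * fundTensor m F z w w) :
    ∀ z : EuclideanSpace ℝ (Fin m), z ≠ 0 →
      (1 / (volume (Metric.ball (0 : EuclideanSpace ℝ (Fin m)) 1)).toReal) *
          (∫ y in {y : EuclideanSpace ℝ (Fin m) | F y < 1}, fundDet m F y) ≤
        Λ ^ m * Real.sqrt (fundDet m F z) := by
  intro z hz
  classical
  haveI : Nontrivial (EuclideanSpace ℝ (Fin m)) :=
    nontrivial_of_ne (EuclideanSpace.single ⟨0, hm⟩ 1) 0 (by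
      intro h
      have := congrFun (congrArg (WithLp.equiv 2 _) h) ⟨0, hm⟩
      simp [EuclideanSpace.single_apply] at this)
  have hVpos' := Metric.measure_ball_pos (volume (α := EuclideanSpace ℝ (Fin m))) 0 one_pos
  set V : ENNReal := volume (Metric.ball (0 : EuclideanSpace ℝ (Fin m)) 1) with hVdef
  set Vr : ℝ := V.toReal with hVrdef
  set s : Set (EuclideanSpace ℝ (Fin m)) := {y : EuclideanSpace ℝ (Fin m) | F y < 1} with hsdef
  -- basic facts about the ball volume
  have hVpos : 0 < V := hVpos'
  have hVfin : V < ⊤ := MeasureTheory.measure_ball_lt_top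
  have hVrpos : 0 < Vr := ENNReal.toReal_pos hVpos.ne' hVfin.ne
  -- the fundamental matrix
  set Mat : EuclideanSpace ℝ (Fin m) → Matrix (Fin m) (Fin m) ℝ := fun y => Matrix.of fun i j =>
    fundTensor m F y (EuclideanSpace.single i 1) (EuclideanSpace.single j 1) with hMatdef
  have hfundDet : ∀ y : EuclideanSpace ℝ (Fin m), fundDet m F y = (Mat y).det := fun y => rfl
  -- a nonzero vector
  have hw0 : (EuclideanSpace.single (⟨0, hm⟩ : Fin m) (1:ℝ) : EuclideanSpace ℝ (Fin m)) ≠ 0 := by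
    intro h
    have := congrFun (congrArg (WithLp.equiv 2 _) h) ⟨0, hm⟩
    simp [EuclideanSpace.single_apply] at this
  -- Λ ≥ 1
  have hΛ1 : 1 ≤ Λ := by
    have hpos := hF.posdef z hz _ hw0
    have := hΛ z hz z hz _ hw0
    nlinarith
  have hΛ0 : 0 < Λ := lt_of_lt_of_le one_pos hΛ1
  -- positive definiteness of the fundamental matrix
  have hMat_pd : ∀ y : EuclideanSpace ℝ (Fin m), y ≠ 0 → (Mat y).PosDef := by
    intro y hy
    rw [posDef_iff_dotProduct_mulVec]
    constructor
    · ext i j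
      simp only [conjTranspose_apply, hMatdef, Matrix.of_apply, star_trivial]
      exact fundTensor_symm hF hy _ _
    · intro x hx
      have := hF.posdef y hy (WithLp.toLp 2 x) (by simpa using hx)
      rw [fundTensor_expand F y (WithLp.toLp 2 x)] at this
      rw [star_trivial]
      exact this
  have hdet_pos : ∀ y : EuclideanSpace ℝ (Fin m), y ≠ 0 → 0 < (Mat y).det := fun y hy => (hMat_pd y hy).det_pos
  set e : EuclideanSpace ℝ (Fin m) → ℝ := fun y => Real.sqrt ((Mat y).det) with hedef
  have he_pos : ∀ y : EuclideanSpace ℝ (Fin m), y ≠ 0 → 0 < e y := fun y hy => Real.sqrt_pos.mpr (hdet_pos y hy)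
  -- volume of sublevel sets of the quadratic form
  have hvol : ∀ y : EuclideanSpace ℝ (Fin m), y ≠ 0 → ∀ r : ℝ, 0 < r →
      volume {x : EuclideanSpace ℝ (Fin m) | fundTensor m F y x x < r} =
        ENNReal.ofReal (Real.sqrt r ^ m / e y) * V := by
    intro y hy r hr
    have : {x : EuclideanSpace ℝ (Fin m) | fundTensor m F y x x < r} =
        {x : EuclideanSpace ℝ (Fin m) | x ⬝ᵥ ((Mat y) *ᵥ x) < r} := by
      ext x
      simp only [Set.mem_setOf_eq, fundTensor_expand F y x, hMatdef]
    rw [this]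
    exact vol_sublevel hm (Mat y) (hMat_pd y hy) hr
  -- comparison of determinants
  have hcomp : ∀ y : EuclideanSpace ℝ (Fin m), y ≠ 0 → e y ≤ Real.sqrt Λ ^ m * e z := by
    intro y hy
    have hsub : {x : EuclideanSpace ℝ (Fin m) | fundTensor m F z x x < 1} ⊆
        {x : EuclideanSpace ℝ (Fin m) | fundTensor m F y x x < Λ} := by
      intro x hx
      simp only [Set.mem_setOf_eq] at hx ⊢
      by_cases hx0 : x = 0
      · rw [hx0, fundTensor_zero_right]
        exact hΛ0
      · calc fundTensor m F y x x ≤ Λ * fundTensor m F z x x := hΛ y hy z hz x hx0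
          _ < Λ * 1 := by
            have h0 : 0 < fundTensor m F x x x := hF.posdef x hx0 x hx0
            exact (mul_lt_mul_iff_right₀ hΛ0).mpr hx
          _ = Λ := mul_one Λ
    have := measure_mono (μ := (volume : MeasureTheory.Measure (EuclideanSpace ℝ (Fin m)))) hsub
    rw [hvol z hz 1 one_pos, hvol y hy Λ hΛ0] at this
    rw [ENNReal.mul_le_mul_iff_left hVpos.ne' hVfin.ne] at this
    rw [ENNReal.ofReal_le_ofReal_iff (by positivity)] at this
    have hez := he_pos z hz
    have hey := he_pos y hy
    rw [Real.sqrt_one, one_pow, div_le_div_iff₀ hez hey] at this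
    linarith
  -- B_F is contained in each ellipsoid of level Λ
  have hμs_le : ∀ y : EuclideanSpace ℝ (Fin m), y ≠ 0 →
      volume s ≤ ENNReal.ofReal (Real.sqrt Λ ^ m / e y) * V := by
    intro y hy
    have hsub : s ⊆ {x : EuclideanSpace ℝ (Fin m) | fundTensor m F y x x < Λ} := by
      intro x hx
      simp only [hsdef, Set.mem_setOf_eq] at hx ⊢
      by_cases hx0 : x = 0
      · rw [hx0, fundTensor_zero_right]
        exact hΛ0
      · calc fundTensor m F y x x ≤ Λ * fundTensor m F x x x := hΛ y hy x hx0 x hx0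
          _ = Λ * (F x) ^ 2 := by rw [fundTensor_self hF hx0]
          _ < Λ * 1 := by
            have h1 : (F x) ^ 2 < 1 := by nlinarith [hF.nonneg x]
            exact (mul_lt_mul_iff_right₀ hΛ0).mpr h1
          _ = Λ := mul_one Λ
    have := measure_mono (μ := (volume : MeasureTheory.Measure (EuclideanSpace ℝ (Fin m)))) hsub
    rwa [hvol y hy Λ hΛ0] at this
  have hsfin : volume s < ⊤ :=
    lt_of_le_of_lt (hμs_le z hz) (ENNReal.mul_lt_top ENNReal.ofReal_lt_top hVfin)
  -- measurability of B_F
  have hs_meas : MeasurableSet s := by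
    have hseq : s = insert (0 : EuclideanSpace ℝ (Fin m))
        ({(0 : EuclideanSpace ℝ (Fin m))}ᶜ ∩ F ⁻¹' Set.Iio 1) := by
      ext x
      constructor
      · intro hx
        by_cases hx0 : x = 0
        · exact hx0 ▸ Set.mem_insert _ _
        · exact Set.mem_insert_of_mem _ ⟨hx0, hx⟩
      · intro hx
        rcases hx with hx | hx
        · simp only [hsdef, Set.mem_setOf_eq, hx, F_zero hF]
          norm_num
        · exact hx.2
    rw [hseq]
    exact ((hF.smooth.continuousOn.isOpen_inter_preimage isOpen_compl_singleton
      isOpen_Iio).measurableSet).insert 0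
  -- main case split
  by_cases hσ0 : volume s = 0
  · have : ∫ y in s, fundDet m F y = 0 := by
      rw [MeasureTheory.Measure.restrict_eq_zero.mpr hσ0, MeasureTheory.integral_zero_measure]
    rw [hsdef] at this
    rw [this, mul_zero]
    have : 0 < Λ ^ m := pow_pos hΛ0 m
    positivity
  · set σ : ℝ := (volume s).toReal with hσdef
    have hσpos : 0 < σ := ENNReal.toReal_pos hσ0 hsfin.ne
    set C : ℝ := Λ ^ m * e z * Vr / σ with hCdef
    have hsqΛ : Real.sqrt Λ ^ m * Real.sqrt Λ ^ m = Λ ^ m := by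
      rw [← mul_pow, Real.mul_self_sqrt hΛ0.le]
    have hkey : ∀ x : EuclideanSpace ℝ (Fin m), x ≠ 0 → ‖fundDet m F x‖ ≤ C := by
      intro x hx0
      have hdx : fundDet m F x = e x * e x := by
        rw [hfundDet, hedef]
        exact (Real.mul_self_sqrt (hdet_pos x hx0).le).symm
      have hex := he_pos x hx0
      have h1 : e x ≤ Real.sqrt Λ ^ m * e z := hcomp x hx0
      have h2 : e x * σ ≤ Real.sqrt Λ ^ m * Vr := by
        have := hμs_le x hx0
        have htr : σ ≤ (Real.sqrt Λ ^ m / e x) * Vr := by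
          calc σ ≤ (ENNReal.ofReal (Real.sqrt Λ ^ m / e x) * V).toReal :=
              ENNReal.toReal_mono (ENNReal.mul_lt_top ENNReal.ofReal_lt_top hVfin).ne this
            _ = (Real.sqrt Λ ^ m / e x) * Vr := by
              rw [ENNReal.toReal_mul, ENNReal.toReal_ofReal (by positivity)]
        calc e x * σ ≤ e x * ((Real.sqrt Λ ^ m / e x) * Vr) := by
              exact mul_le_mul_of_nonneg_left htr hex.le
          _ = Real.sqrt Λ ^ m * Vr := by field_simp
      have hnorm : ‖fundDet m F x‖ = e x * e x := by
        rw [hdx, Real.norm_eq_abs, abs_of_nonneg (by positivity)]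
      rw [hnorm, hCdef, le_div_iff₀ hσpos]
      calc e x * e x * σ = e x * (e x * σ) := by ring
        _ ≤ e x * (Real.sqrt Λ ^ m * Vr) := mul_le_mul_of_nonneg_left h2 hex.le
        _ ≤ (Real.sqrt Λ ^ m * e z) * (Real.sqrt Λ ^ m * Vr) := by
            apply mul_le_mul_of_nonneg_right h1
            exact mul_nonneg (pow_nonneg (Real.sqrt_nonneg Λ) m) ENNReal.toReal_nonneg
        _ = Λ ^ m * e z * Vr := by rw [← hsqΛ]; ring
    have hae : ∀ᵐ x ∂(volume : MeasureTheory.Measure (EuclideanSpace ℝ (Fin m))),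
        x ∈ s → ‖fundDet m F x‖ ≤ C := by
      have h0 : ∀ᵐ x ∂(volume : MeasureTheory.Measure (EuclideanSpace ℝ (Fin m))),
          x ≠ (0 : EuclideanSpace ℝ (Fin m)) := by
        rw [MeasureTheory.ae_iff]
        simpa using MeasureTheory.measure_singleton (0 : EuclideanSpace ℝ (Fin m))
      filter_upwards [h0] with x hx _
      exact hkey x hx
    have hbound := MeasureTheory.norm_setIntegral_le_of_norm_le_const_ae' hsfin hae
    have hint : ∫ y in s, fundDet m F y ≤ C * σ :=
      le_trans (le_abs_self _) hbound
    have hCσ : C * σ = Λ ^ m * e z * Vr := by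
      rw [hCdef]
      field_simp
    rw [hsdef] at hint
    calc (1 / Vr) * (∫ y in {y : EuclideanSpace ℝ (Fin m) | F y < 1}, fundDet m F y)
        ≤ (1 / Vr) * (C * σ) := by
          apply mul_le_mul_of_nonneg_left hint (by positivity)
      _ = Λ ^ m * e z := by
          rw [hCσ]
          field_simp
      _ = Λ ^ m * Real.sqrt (fundDet m F z) := by rw [hfundDet z]
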